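/- The structure coefficients k_{λδ}^ρ of A^m_n, defined by 𝐀_λ(n)𝐀_δ(n) = Σ_ρ k_{λδ}^ρ 𝐀_ρ(n), do not depend on n: they equal the cardinality of {((d₁,ω₁),(d₂,ω₂)) ∈ A_λ(n) × A_δ(n) : (d₁,ω₁)·(d₂,ω₂) = (d,ω)} for any fixed (d, ω) of m-marked cycle type ρ, and this cardinality is independent of n ≥ max(|λ|,|δ|,|ρ|) and of the chosen representative (d, ω). -/

import Mathlib

/-- An `m`-partial permutation (of ℕ): a finite domain `d` containing `[m] = {0,…,m-1}`
together with a permutation of `d`, encoded by its extension `σ` to `ℕ` which is the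
identity outside `d`. -/
structure MPP (m : ℕ) where
  d : Finset ℕ
  σ : Equiv.Perm ℕ
  range_sub : Finset.range m ⊆ d
  fix : ∀ x ∉ d, σ x = x

namespace MPP

variable {m : ℕ}

@[ext] theorem ext {p q : MPP m} (hd : p.d = q.d) (hσ : p.σ = q.σ) : p = q := by
  cases p; cases q; simp only [mk.injEq]; exact ⟨hd, hσ⟩

/-- The product of `m`-partial permutations: union of the domains, composition of the
extended permutations (restricted to the union). -/
instance : Monoid (MPP m) where
  mul p q := ⟨p.d ∪ q.d, p.σ * q.σ, p.range_sub.trans Finset.subset_union_left,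
    fun x hx => by
      have hq : x ∉ q.d := fun h => hx (Finset.mem_union_right _ h)
      have hp : x ∉ p.d := fun h => hx (Finset.mem_union_left _ h)
      simp [Equiv.Perm.mul_apply, q.fix x hq, p.fix x hp]⟩
  one := ⟨Finset.range m, 1, le_refl _, fun _ _ => rfl⟩
  mul_assoc p q r := ext (Finset.union_assoc _ _ _) (mul_assoc _ _ _)
  one_mul p := ext (Finset.union_eq_right.mpr p.range_sub) (one_mul _)
  mul_one p := ext (Finset.union_eq_left.mpr p.range_sub) (mul_one _)

@[simp] theorem mul_d (p q : MPP m) : (p * q).d = p.d ∪ q.d := rfl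
@[simp] theorem mul_σ (p q : MPP m) : (p * q).σ = p.σ * q.σ := rfl
@[simp] theorem one_d : (1 : MPP m).d = Finset.range m := rfl
@[simp] theorem one_σ : (1 : MPP m).σ = 1 := rfl

/-- Two `m`-partial permutations have the same `m`-marked cycle type iff there is a
relabelling of ℕ fixing `[m]` pointwise carrying one to the other. -/
def sameType (p q : MPP m) : Prop :=
  ∃ σ : Equiv.Perm ℕ, (∀ x < m, σ x = x) ∧ p.d.image σ = q.d ∧ σ * p.σ * σ⁻¹ = q.σ

/-- `m₁`: the number of trivial cycles `(∗)`, i.e. fixed points of the permutation lying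
in the domain but outside `[m]`. -/
def m1 (p : MPP m) : ℕ := ((p.d \ Finset.range m).filter (fun x => p.σ x = x)).card

/-- `p` padded with fixed points so that its domain becomes `[n]` (when `p.d ⊆ [n]`);
this realizes the shape `ρ̲ₙ`. -/
def padTo (n : ℕ) (p : MPP m) : MPP m :=
  ⟨p.d ∪ Finset.range n, p.σ, p.range_sub.trans Finset.subset_union_left,
   fun x hx => p.fix x fun h => hx (Finset.mem_union_left _ h)⟩

/-- `p` with `k` fresh fixed points adjoined to its domain; this realizes the shape `ρᵏ`. -/
def addFix (p : MPP m) (k : ℕ) : MPP m :=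
  ⟨p.d ∪ (Finset.range (p.d.sup id + 1 + k) \ Finset.range (p.d.sup id + 1)), p.σ,
   p.range_sub.trans Finset.subset_union_left,
   fun x hx => p.fix x fun h => hx (Finset.mem_union_left _ h)⟩

/-- A shape is proper when it has no cycle `(∗)`, i.e. no fixed point outside `[m]`. -/
def isProper (p : MPP m) : Prop := ∀ x ∈ p.d, m ≤ x → p.σ x ≠ x

/-- The subgroup `Stab_n(m)` of permutations of ℕ fixing `[m]` pointwise and fixing
everything outside `[n]` (i.e. `Stab_n(m) ≤ S_n`). -/
def StabN (m n : ℕ) : Subgroup (Equiv.Perm ℕ) where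
  carrier := {σ | (∀ x < m, σ x = x) ∧ (∀ x, n ≤ x → σ x = x)}
  one_mem' := ⟨fun _ _ => rfl, fun _ _ => rfl⟩
  mul_mem' := by
    rintro σ τ ⟨h1, h2⟩ ⟨h3, h4⟩
    exact ⟨fun x hx => by simp [Equiv.Perm.mul_apply, h3 x hx, h1 x hx],
           fun x hx => by simp [Equiv.Perm.mul_apply, h4 x hx, h2 x hx]⟩
  inv_mem' := by
    rintro σ ⟨h1, h2⟩
    refine ⟨fun x hx => ?_, fun x hx => ?_⟩
    · conv_lhs => rw [← h1 x hx]
      exact Equiv.symm_apply_apply σ x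
    · conv_lhs => rw [← h2 x hx]
      exact Equiv.symm_apply_apply σ x

/-- The conjugation action of `Stab_n(m)` on `m`-partial permutations:
`σ·(d,ω) = (σ(d), σ∘ω∘σ⁻¹)`. -/
def conjAct {n : ℕ} (σ : StabN m n) (p : MPP m) : MPP m :=
  ⟨p.d.image (σ : Equiv.Perm ℕ), (σ : Equiv.Perm ℕ) * p.σ * (σ : Equiv.Perm ℕ)⁻¹,
   fun x hx => Finset.mem_image.mpr
     ⟨x, p.range_sub hx, σ.2.1 x (Finset.mem_range.mp hx)⟩,
   fun x hx => by
     have h1 : (σ : Equiv.Perm ℕ)⁻¹ x ∉ p.d := fun h =>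
       hx (Finset.mem_image.mpr ⟨_, h, Equiv.apply_symm_apply _ x⟩)
     rw [Equiv.Perm.mul_apply, Equiv.Perm.mul_apply, p.fix _ h1]
     exact Equiv.apply_symm_apply _ x⟩

end MPP

/-- The set E_{λδ}^ρ(n) of pairs of m-partial permutations of [n], of types λ and δ,
whose product is the fixed m-partial permutation r of type ρ. -/
def Eset (m n : ℕ) (rl rd r : MPP m) : Set (MPP m × MPP m) :=
  {pq | pq.1.d ⊆ Finset.range n ∧ pq.2.d ⊆ Finset.range n ∧
    MPP.sameType rl pq.1 ∧ MPP.sameType rd pq.2 ∧ pq.1 * pq.2 = r}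


namespace MPP

variable {m : ℕ}

theorem sigma_mem_d {p : MPP m} {x : ℕ} (hx : x ∈ p.d) : p.σ x ∈ p.d := by
  by_contra h
  have h1 : p.σ (p.σ x) = p.σ x := p.fix _ h
  have h2 : p.σ x = x := p.σ.injective h1
  rw [h2] at h; exact h hx

theorem finite_dom (m n : ℕ) : {p : MPP m | p.d ⊆ Finset.range n}.Finite := by
  rw [Set.finite_coe_iff.symm]
  classical
  have key : ∀ p : {p : MPP m | p.d ⊆ Finset.range n}, ∀ i : Fin n,
      (p : MPP m).σ i < n := by
    rintro ⟨p, hp⟩ i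
    by_cases h : (i : ℕ) ∈ p.d
    · exact Finset.mem_range.mp (hp (sigma_mem_d h))
    · rw [p.fix _ h]; exact i.2
  let f : {p : MPP m | p.d ⊆ Finset.range n} → (Fin n → Bool) × (Fin n → Fin n) :=
    fun p => (fun i => decide ((i : ℕ) ∈ (p : MPP m).d),
              fun i => ⟨(p : MPP m).σ i, key p i⟩)
  have hf : Function.Injective f := by
    rintro ⟨p, hp⟩ ⟨q, hq⟩ h
    have h1 := congrArg Prod.fst h
    have h2 := congrArg Prod.snd h
    have hd : p.d = q.d := by
      ext x
      by_cases hx : x < n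
      · have := congrFun h1 ⟨x, hx⟩
        simpa [f] using this
      · constructor
        · intro h; exact absurd (Finset.mem_range.mp (hp h)) hx
        · intro h; exact absurd (Finset.mem_range.mp (hq h)) hx
    have hσ : p.σ = q.σ := by
      ext x
      by_cases hx : x < n
      · have := congrFun h2 ⟨x, hx⟩
        exact congrArg Fin.val this
      · have hx1 : x ∉ p.d := fun h => hx (Finset.mem_range.mp (hp h))
        have hx2 : x ∉ q.d := fun h => hx (Finset.mem_range.mp (hq h))
        rw [p.fix _ hx1, q.fix _ hx2]
    exact Subtype.ext (MPP.ext hd hσ)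
  exact Finite.of_injective f hf

theorem sameType_symm {p q : MPP m} (h : sameType p q) : sameType q p := by
  obtain ⟨σ, hm, hd, hc⟩ := h
  refine ⟨σ⁻¹, fun x hx => ?_, ?_, ?_⟩
  · conv_lhs => rw [← hm x hx]
    exact Equiv.symm_apply_apply σ x
  · rw [← hd, Finset.image_image]
    have : ⇑σ⁻¹ ∘ ⇑σ = id := by ext x; simp
    rw [this, Finset.image_id]
  · rw [← hc]; group

theorem sameType_trans {p q r : MPP m} (h1 : sameType p q) (h2 : sameType q r) :
    sameType p r := by
  obtain ⟨τ, hτm, hτd, hτc⟩ := h1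
  obtain ⟨σ, hσm, hσd, hσc⟩ := h2
  refine ⟨σ * τ, fun x hx => ?_, ?_, ?_⟩
  · simp [Equiv.Perm.mul_apply, hτm x hx, hσm x hx]
  · rw [← hσd, ← hτd, Finset.image_image]
    rfl
  · rw [← hσc, ← hτc]; group

/-- Conjugation by an arbitrary permutation fixing `[m]` pointwise. -/
def conjP (σ : Equiv.Perm ℕ) (hm : ∀ x < m, σ x = x) (p : MPP m) : MPP m :=
  ⟨p.d.image σ, σ * p.σ * σ⁻¹,
   fun x hx => Finset.mem_image.mpr ⟨x, p.range_sub hx, hm x (Finset.mem_range.mp hx)⟩,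
   fun x hx => by
     have h1 : σ⁻¹ x ∉ p.d := fun h =>
       hx (Finset.mem_image.mpr ⟨_, h, Equiv.apply_symm_apply _ x⟩)
     rw [Equiv.Perm.mul_apply, Equiv.Perm.mul_apply, p.fix _ h1]
     exact Equiv.apply_symm_apply _ x⟩

@[simp] theorem conjP_d (σ : Equiv.Perm ℕ) (hm : ∀ x < m, σ x = x) (p : MPP m) :
    (conjP σ hm p).d = p.d.image σ := rfl

@[simp] theorem conjP_σ (σ : Equiv.Perm ℕ) (hm : ∀ x < m, σ x = x) (p : MPP m) :
    (conjP σ hm p).σ = σ * p.σ * σ⁻¹ := rfl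

theorem conjP_mul (σ : Equiv.Perm ℕ) (hm : ∀ x < m, σ x = x) (p q : MPP m) :
    conjP σ hm (p * q) = conjP σ hm p * conjP σ hm q := by
  refine MPP.ext ?_ ?_
  · simp [Finset.image_union]
  · simp only [conjP_σ, mul_σ]; group

theorem sameType_conjP (σ : Equiv.Perm ℕ) (hm : ∀ x < m, σ x = x) (p : MPP m) :
    sameType p (conjP σ hm p) := ⟨σ, hm, rfl, rfl⟩

theorem conjP_inv (σ : Equiv.Perm ℕ) (hm : ∀ x < m, σ x = x)
    (hm' : ∀ x < m, σ⁻¹ x = x) (p : MPP m) : conjP σ⁻¹ hm' (conjP σ hm p) = p := by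
  refine MPP.ext ?_ ?_
  · rw [conjP_d, conjP_d, Finset.image_image]
    have : ⇑σ⁻¹ ∘ ⇑σ = id := by ext x; simp
    rw [this, Finset.image_id]
  · simp only [conjP_σ]; group

theorem conjP_inv' (σ : Equiv.Perm ℕ) (hm : ∀ x < m, σ x = x)
    (hm' : ∀ x < m, σ⁻¹ x = x) (p : MPP m) : conjP σ hm (conjP σ⁻¹ hm' p) = p := by
  refine MPP.ext ?_ ?_
  · rw [conjP_d, conjP_d, Finset.image_image]
    have : ⇑σ ∘ ⇑σ⁻¹ = id := by ext x; simp
    rw [this, Finset.image_id]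
  · simp only [conjP_σ]; group

end MPP

/-- the structure coefficients of A^m_n, read off as the coefficient of a
basis element in 𝐀_λ(n)·𝐀_δ(n), equal |E_{λδ}^ρ(n)|, and this cardinality is
independent of n ≥ max(|λ|,|δ|,|ρ|) and of the representative of ρ. -/
theorem structure_coeff_stable (m n n' : ℕ) (rl rd r r' : MPP m)
    (hln : rl.d.card ≤ n) (hdn : rd.d.card ≤ n) (hrn : r.d ⊆ Finset.range n)
    (hln' : rl.d.card ≤ n') (hdn' : rd.d.card ≤ n') (hrn' : r'.d ⊆ Finset.range n')
    (hrr' : MPP.sameType r r') :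
    ((∑ᶠ p ∈ {p : MPP m | p.d ⊆ Finset.range n ∧ MPP.sameType rl p},
        MonoidAlgebra.single p (1 : ℂ)) *
      (∑ᶠ p ∈ {p : MPP m | p.d ⊆ Finset.range n ∧ MPP.sameType rd p},
        MonoidAlgebra.single p (1 : ℂ))).coeff r = Nat.card (Eset m n rl rd r) ∧
    Nat.card (Eset m n rl rd r) = Nat.card (Eset m n' rl rd r') := by
  classical
  obtain ⟨σ, hm, hd, hc⟩ := hrr'
  have hm' : ∀ x < m, σ⁻¹ x = x := by
    intro x hx
    conv_lhs => rw [← hm x hx]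
    exact Equiv.symm_apply_apply σ x
  have hA : {p : MPP m | p.d ⊆ Finset.range n ∧ MPP.sameType rl p}.Finite :=
    (MPP.finite_dom m n).subset (fun p hp => hp.1)
  have hB : {p : MPP m | p.d ⊆ Finset.range n ∧ MPP.sameType rd p}.Finite :=
    (MPP.finite_dom m n).subset (fun p hp => hp.1)
  set A := hA.toFinset with hAdef
  set B := hB.toFinset with hBdef
  have key : Eset m n rl rd r =
      ↑((A ×ˢ B).filter (fun pq => pq.1 * pq.2 = r)) := by
    ext ⟨p, q⟩
    simp only [Eset, Set.mem_setOf_eq, Finset.coe_filter, Finset.mem_product,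
      hAdef, hBdef, Set.Finite.mem_toFinset, Set.mem_setOf_eq]
    tauto
  constructor
  · rw [finsum_mem_eq_finite_toFinset_sum _ hA, finsum_mem_eq_finite_toFinset_sum _ hB,
      ← hAdef, ← hBdef, Finset.sum_mul_sum]
    have : ∀ p q : MPP m,
        MonoidAlgebra.single p (1 : ℂ) * MonoidAlgebra.single q 1 =
          MonoidAlgebra.single (p * q) 1 := by
      intro p q; rw [MonoidAlgebra.single_mul_single, one_mul]
    simp only [this]
    rw [key, Nat.card_coe_set_eq, Set.ncard_coe_finset]
    have happ : ∀ (S : Finset (MPP m)) (f : MPP m → MonoidAlgebra ℂ (MPP m)),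
        (∑ x ∈ S, f x).coeff r = ∑ x ∈ S, (f x).coeff r := fun S f => by
        rw [MonoidAlgebra.coeff_sum, Finsupp.finset_sum_apply]
    have hsingle : ∀ p x : MPP m,
        (MonoidAlgebra.single p (1 : ℂ)).coeff x = if p = x then 1 else 0 :=
      fun p x => by rw [MonoidAlgebra.coeff_single, Finsupp.single_apply]
    simp only [happ, hsingle]
    rw [← Finset.sum_product']
    rw [Finset.sum_boole]
  · -- independence of n and the representative
    apply Nat.card_congr
    have mem_imp : ∀ pq : MPP m × MPP m, pq ∈ Eset m n rl rd r →
        (MPP.conjP σ hm pq.1, MPP.conjP σ hm pq.2) ∈ Eset m n' rl rd r' := by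
      rintro ⟨p, q⟩ ⟨h1, h2, h3, h4, h5⟩
      have hpd : p.d ⊆ r.d := by
        rw [← h5, MPP.mul_d]; exact Finset.subset_union_left
      have hqd : q.d ⊆ r.d := by
        rw [← h5, MPP.mul_d]; exact Finset.subset_union_right
      have hcr : MPP.conjP σ hm r = r' := MPP.ext hd hc
      refine ⟨?_, ?_, ?_, ?_, ?_⟩
      · exact (Finset.image_subset_image hpd).trans (hd ▸ hrn')
      · exact (Finset.image_subset_image hqd).trans (hd ▸ hrn')
      · exact MPP.sameType_trans h3 (MPP.sameType_conjP σ hm p)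
      · exact MPP.sameType_trans h4 (MPP.sameType_conjP σ hm q)
      · rw [← MPP.conjP_mul, h5, hcr]
    have mem_imp' : ∀ pq : MPP m × MPP m, pq ∈ Eset m n' rl rd r' →
        (MPP.conjP σ⁻¹ hm' pq.1, MPP.conjP σ⁻¹ hm' pq.2) ∈ Eset m n rl rd r := by
      rintro ⟨p, q⟩ ⟨h1, h2, h3, h4, h5⟩
      have hpd : p.d ⊆ r'.d := by
        rw [← h5, MPP.mul_d]; exact Finset.subset_union_left
      have hqd : q.d ⊆ r'.d := by
        rw [← h5, MPP.mul_d]; exact Finset.subset_union_right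
      have hcr : MPP.conjP σ⁻¹ hm' r' = r := by
        rw [← MPP.ext hd hc (p := MPP.conjP σ hm r), MPP.conjP_inv]
      have hd' : r'.d.image ⇑σ⁻¹ = r.d := by
        rw [← hd, Finset.image_image]
        have : ⇑σ⁻¹ ∘ ⇑σ = id := by ext x; simp
        rw [this, Finset.image_id]
      refine ⟨?_, ?_, ?_, ?_, ?_⟩
      · exact (Finset.image_subset_image hpd).trans (hd' ▸ hrn)
      · exact (Finset.image_subset_image hqd).trans (hd' ▸ hrn)
      · exact MPP.sameType_trans h3 (MPP.sameType_conjP σ⁻¹ hm' p)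
      · exact MPP.sameType_trans h4 (MPP.sameType_conjP σ⁻¹ hm' q)
      · rw [← MPP.conjP_mul, h5, hcr]
    exact {
      toFun := fun x => ⟨(MPP.conjP σ hm x.1.1, MPP.conjP σ hm x.1.2), mem_imp x.1 x.2⟩
      invFun := fun x => ⟨(MPP.conjP σ⁻¹ hm' x.1.1, MPP.conjP σ⁻¹ hm' x.1.2),
        mem_imp' x.1 x.2⟩
      left_inv := fun x => by
        apply Subtype.ext
        simp [MPP.conjP_inv]
      right_inv := fun x => by
        apply Subtype.ext
        simp [MPP.conjP_inv'] }
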